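/- arXiv:1004.0323 — 2 statements merged into one kernel-verified Lean document; each statement's English description precedes it below -/
import Mathlib

section
/- Let X be a locally compact, σ-compact Hausdorff space and let φ : ℝ × X → X be a flow: φ is continuous, φ(0,x) = x and φ(t, φ(s,x)) = φ(t+s, x) for all t, s ∈ ℝ, x ∈ X. The following are equivalent: (i) the orbit relation 𝒪φ = {(x, φ(t,x)) : t ≥ 0, x ∈ X} is a closed subset of X × X, and there is no periodic point, i.e. no x ∈ X and t ≥ 1 with φ(t,x) = x; (ii) Ωφ = ⋂_{T ≥ 0} closure({(x, φ(t,x)) : t ≥ T, x ∈ X}) is empty; (iii) φ is parallelizable: there exist a topological space Y and a homeomorphism h : ℝ × Y → X such that φ(t, h(s,y)) = h(t+s, y) for all t, s ∈ ℝ and y ∈ Y. -/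
/-!
A continuous time function `τ : X → ℝ` with `τ (φ (t, x)) = τ x + t` is the same thing as a
parallelization (take `Y = τ ⁻¹' {0}`), and it forces `Ωφ = ∅`, since `τ y - τ x ≥ T` on the
closure of the pairs `(x, φ (t, x))` with `t ≥ T`.

Conversely, if `Ωφ = ∅` the flow is free, return times to a compact set are bounded, and the
orbit relation is closed, so the orbit space is Hausdorff, locally compact and σ-compact, hence
paracompact. Near a point `x₀`, take a Urysohn function `f` vanishing near the orbit arc
`φ ([-1/4, 1/4], x₀)` and equal to `1` near `φ ([3/4, 5/4], x₀)`; the Bebutov function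
`g y = ∫₀¹ f (φ (s, y)) ds` then satisfies `g (φ (t, y)) = g y + t` for small `t`, so a level set
of `g` near `x₀` is a local section, and the time needed to reach it is a time function on a
saturated neighbourhood. A partition of unity on the orbit space glues these local time functions.
-/

universe u

/-- The flow `φ` on `X` is parallelized by the homeomorphism `h : ℝ × Y → X`, i.e.
`h` is an isomorphism from the translation flow on `ℝ × Y` to `φ`. -/
def Parallelizes {X : Type u} [TopologicalSpace X] (φ : ℝ × X → X)
    (Y : Type u) [TopologicalSpace Y] (h : ℝ × Y → X) : Prop :=
  IsHomeomorph h ∧ ∀ (t s : ℝ) (y : Y), φ (t, h (s, y)) = h (t + s, y)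

open Set Filter Topology

theorem exists_continuous_eventually_eq_zero_one {X : Type*} [TopologicalSpace X] [NormalSpace X]
    {s t : Set X} (hs : IsClosed s) (ht : IsClosed t) (hst : Disjoint s t) :
    ∃ f : C(X, ℝ), (∀ᶠ x in 𝓝ˢ s, f x = 0) ∧ ∀ᶠ x in 𝓝ˢ t, f x = 1 := by
  obtain ⟨U, V, hU, hV, hsU, htV, hUV⟩ := normal_separation hs ht hst
  obtain ⟨U', hU', hsU', hU'U⟩ := normal_exists_closure_subset hs hU hsU
  obtain ⟨V', hV', htV', hV'V⟩ := normal_exists_closure_subset ht hV htV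
  obtain ⟨f, hf0, hf1, -⟩ := exists_continuous_zero_one_of_isClosed isClosed_closure
    isClosed_closure (hUV.mono hU'U hV'V)
  exact ⟨f, mem_of_superset (hU'.mem_nhdsSet.2 hsU') fun x hx => hf0 (subset_closure hx),
    mem_of_superset (hV'.mem_nhdsSet.2 htV') fun x hx => hf1 (subset_closure hx)⟩

theorem integral_shift_eq_add_of_eqOn {f : ℝ → ℝ} (hf : Continuous f) {t : ℝ}
    (h0 : EqOn f 0 (uIcc 0 t)) (h1 : EqOn f 1 (uIcc 1 (1 + t))) :
    ∫ s in t..1 + t, f s = (∫ s in (0 : ℝ)..1, f s) + t := by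
  have h := intervalIntegral.integral_interval_sub_interval_comm'
    (hf.intervalIntegrable (μ := MeasureTheory.volume) t (1 + t)) (hf.intervalIntegrable 0 1)
    (hf.intervalIntegrable t 0)
  rw [intervalIntegral.integral_congr h0, intervalIntegral.integral_congr h1] at h
  simp only [Pi.zero_apply, Pi.one_apply, intervalIntegral.integral_const, smul_eq_mul,
    mul_zero, mul_one, sub_zero, add_sub_cancel_left] at h
  linarith

namespace PartitionOfUnity

variable {ι X Y : Type*} [TopologicalSpace X] [TopologicalSpace Y]

def comap (ρ : PartitionOfUnity ι Y) (q : C(X, Y)) : PartitionOfUnity ι X where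
  toFun i := (ρ i).comp q
  locallyFinite' := ρ.locallyFinite.preimage_continuous q.continuous
  nonneg' i x := ρ.nonneg i (q x)
  sum_eq_one' x _ := ρ.sum_eq_one (mem_univ (q x))
  sum_le_one' x := ρ.sum_le_one (q x)

end PartitionOfUnity

namespace Flow

variable {X : Type u} [TopologicalSpace X] (ϕ : Flow ℝ X)

/-- `ϕ.orbitRelAfter 0` is the orbit relation `𝒪φ`, and `ϕ.limitRel` is `Ωφ`. -/
def orbitRelAfter (T : ℝ) : Set (X × X) :=
  {p | ∃ t, T ≤ t ∧ p.2 = ϕ t p.1}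

def limitRel : Set (X × X) :=
  ⋂ T ∈ Ici (0 : ℝ), closure (ϕ.orbitRelAfter T)

structure IsTimeOn (τ : X → ℝ) (V : Set X) : Prop where
  continuousAt : ∀ x ∈ V, ContinuousAt τ x
  map_flow : ∀ t, ∀ x ∈ V, τ (ϕ t x) = τ x + t

variable {ϕ} in
theorem IsTimeOn.mono {τ : X → ℝ} {V W : Set X} (h : ϕ.IsTimeOn τ V) (hWV : W ⊆ V) :
    ϕ.IsTimeOn τ W :=
  ⟨fun x hx => h.continuousAt x (hWV hx), fun t x hx => h.map_flow t x (hWV hx)⟩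

variable {ϕ} in
theorem IsTimeOn.continuous {τ : X → ℝ} (h : ϕ.IsTimeOn τ univ) : Continuous τ :=
  continuous_iff_continuousAt.2 fun x => h.continuousAt x trivial

theorem orbitRelAfter_anti : Antitone ϕ.orbitRelAfter :=
  fun _ _ hST _ ⟨t, ht, hp⟩ => ⟨t, hST.trans ht, hp⟩

theorem limitRel_subset_closure (T : ℝ) : ϕ.limitRel ⊆ closure (ϕ.orbitRelAfter T) :=
  fun _ hp => closure_mono (ϕ.orbitRelAfter_anti (le_max_left T 0))
    (mem_iInter₂.1 hp _ (le_max_right T 0))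

theorem prodMap_mem_limitRel {p : X × X} (hp : p ∈ ϕ.limitRel) (a b : ℝ) :
    (ϕ a p.1, ϕ b p.2) ∈ ϕ.limitRel := by
  refine mem_iInter₂.2 fun T _ => ?_
  refine map_mem_closure (f := Prod.map (ϕ a) (ϕ b))
    ((ϕ.continuous_toFun a).prodMap (ϕ.continuous_toFun b))
    (ϕ.limitRel_subset_closure (T + a - b) hp) ?_
  rintro ⟨x, y⟩ ⟨t, ht, (rfl : y = ϕ t x)⟩
  refine ⟨b + t - a, by linarith, ?_⟩
  simp only [Prod.map, ← map_add, sub_add_cancel]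

theorem eq_zero_of_apply_eq_self (hΩ : ϕ.limitRel = ∅) {t : ℝ} {x : X} (h : ϕ t x = x) :
    t = 0 := by
  let := ϕ.toAddAction
  have ht : t ∈ AddAction.stabilizer ℝ x := h
  by_contra hne
  have habs : |t| ∈ AddAction.stabilizer ℝ x := by
    rcases abs_choice t with h' | h' <;> rw [h']
    exacts [ht, neg_mem ht]
  have hx : (x, x) ∈ ϕ.limitRel := mem_iInter₂.2 fun T _ => subset_closure <| by
    obtain ⟨n, hn⟩ := Archimedean.arch T (abs_pos.2 hne)
    exact ⟨n • |t|, hn, (AddSubgroup.nsmul_mem _ habs n).symm⟩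
  rw [hΩ] at hx
  exact hx

theorem isClosed_setOf_exists_mem_eq_apply [T2Space X] {I : Set ℝ} (hI : IsCompact I) :
    IsClosed {p : X × X | ∃ t ∈ I, p.2 = ϕ t p.1} := by
  have : CompactSpace I := isCompact_iff_compactSpace.mp hI
  have hcl : IsClosed {q : I × (X × X) | q.2.2 = ϕ q.1 q.2.1} :=
    isClosed_eq (by fun_prop) (ϕ.continuous (by fun_prop) (by fun_prop))
  convert isClosedMap_snd_of_compactSpace _ hcl using 1
  ext p
  simp

theorem isClosed_orbitRelAfter_zero [T2Space X] (hΩ : ϕ.limitRel = ∅) :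
    IsClosed (ϕ.orbitRelAfter 0) := by
  refine isClosed_of_closure_subset fun p hp => ?_
  obtain ⟨T, -, hpT⟩ : ∃ T ∈ Ici (0 : ℝ), p ∉ closure (ϕ.orbitRelAfter T) := by
    by_contra! h
    have hp : p ∈ ϕ.limitRel := mem_iInter₂.2 h
    rw [hΩ] at hp
    exact hp
  have hsub : ϕ.orbitRelAfter 0 ⊆ {p | ∃ t ∈ Icc 0 T, p.2 = ϕ t p.1} ∪ ϕ.orbitRelAfter T := by
    rintro q ⟨t, ht, hq⟩
    rcases le_total t T with h | h
    exacts [Or.inl ⟨t, ⟨ht, h⟩, hq⟩, Or.inr ⟨t, h, hq⟩]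
  have hp' := closure_mono hsub hp
  rw [closure_union, (ϕ.isClosed_setOf_exists_mem_eq_apply isCompact_Icc).closure_eq] at hp'
  rcases hp' with ⟨t, ht, hq⟩ | h
  exacts [⟨t, ht.1, hq⟩, absurd h hpT]

theorem limitRel_eq_empty_of_isClosed (hC : IsClosed (ϕ.orbitRelAfter 0))
    (hper : ¬∃ (x : X) (t : ℝ), 1 ≤ t ∧ ϕ t x = x) : ϕ.limitRel = ∅ := by
  refine eq_empty_iff_forall_notMem.2 fun ⟨x, y⟩ hp => hper ?_
  -- `y = φ (t, x)`, so `(φ (t + 1, x), y) = (φ (1, y), y) ∈ Ωφ ⊆ 𝒪φ` makes `y` periodic.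
  have hsub : ϕ.limitRel ⊆ ϕ.orbitRelAfter 0 := hC.closure_eq ▸ ϕ.limitRel_subset_closure 0
  obtain ⟨t, -, (rfl : y = ϕ t x)⟩ := hsub hp
  obtain ⟨u, hu, hy⟩ := hsub (ϕ.prodMap_mem_limitRel hp (t + 1) 0)
  refine ⟨ϕ t x, u + 1, by linarith, ?_⟩
  simp only [map_zero_apply] at hy
  calc ϕ (u + 1) (ϕ t x) = ϕ u (ϕ (t + 1) x) := by
        rw [← map_add, ← map_add, add_assoc, add_comm 1 t]
    _ = ϕ t x := hy.symm

theorem limitRel_eq_empty_iff [T2Space X] :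
    ϕ.limitRel = ∅ ↔ IsClosed (ϕ.orbitRelAfter 0) ∧ ¬∃ (x : X) (t : ℝ), 1 ≤ t ∧ ϕ t x = x :=
  ⟨fun hΩ => ⟨ϕ.isClosed_orbitRelAfter_zero hΩ, fun ⟨_, _, ht, h⟩ => by
      linarith [ϕ.eq_zero_of_apply_eq_self hΩ h]⟩,
    fun ⟨hC, hper⟩ => ϕ.limitRel_eq_empty_of_isClosed hC hper⟩

theorem limitRel_eq_empty_of_isTimeOn {τ : X → ℝ} (hτ : ϕ.IsTimeOn τ univ) :
    ϕ.limitRel = ∅ := by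
  have hsub (T : ℝ) : closure (ϕ.orbitRelAfter T) ⊆ {p | T ≤ τ p.2 - τ p.1} := by
    have hc := hτ.continuous
    refine closure_minimal ?_ (isClosed_le continuous_const (by fun_prop))
    rintro ⟨x, y⟩ ⟨t, ht, (rfl : y = ϕ t x)⟩
    simp only [mem_ofPred_eq, hτ.map_flow t x trivial]
    linarith
  refine eq_empty_iff_forall_notMem.2 fun p hp => ?_
  have h := hsub _ (ϕ.limitRel_subset_closure (τ p.2 - τ p.1 + 1) hp)
  simp only [mem_ofPred_eq] at h
  linarith

theorem exists_isTimeOn_of_parallelizes {Y : Type u} [TopologicalSpace Y] {h : ℝ × Y → X}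
    (hh : Parallelizes (fun p : ℝ × X => ϕ p.1 p.2) Y h) : ∃ τ, ϕ.IsTimeOn τ univ := by
  obtain ⟨hhom, hϕ⟩ := hh
  let e := hhom.homeomorph h
  refine ⟨fun x => (e.symm x).1,
    ⟨fun x _ => (continuous_fst.comp e.symm.continuous).continuousAt, fun t x _ => ?_⟩⟩
  obtain ⟨⟨s, y⟩, rfl⟩ := e.surjective x
  have he : ϕ t (e (s, y)) = e (t + s, y) := hϕ t s y
  simp only [he, e.symm_apply_apply]
  ring

theorem parallelizes_of_isTimeOn {τ : X → ℝ} (hτ : ϕ.IsTimeOn τ univ) :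
    Parallelizes (fun p : ℝ × X => ϕ p.1 p.2) {x // τ x = 0} (fun p => ϕ p.1 p.2) := by
  have hzero (x : X) : τ (ϕ (-τ x) x) = 0 := by
    rw [hτ.map_flow _ _ trivial]
    ring
  let e : ℝ × {x // τ x = 0} ≃ₜ X :=
    { toFun p := ϕ p.1 p.2
      invFun x := (τ x, ⟨ϕ (-τ x) x, hzero x⟩)
      left_inv := by
        rintro ⟨t, y, hy⟩
        have ht : τ (ϕ t y) = t := by rw [hτ.map_flow _ _ trivial, hy, zero_add]
        ext <;> simp [ht, ← map_add]
      right_inv x := by simp [← map_add]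
      continuous_toFun := ϕ.continuous continuous_fst (continuous_subtype_val.comp continuous_snd)
      continuous_invFun :=
        hτ.continuous.prodMk ((ϕ.continuous hτ.continuous.neg continuous_id).subtype_mk _) }
  exact ⟨e.isHomeomorph, fun t s y => (ϕ.map_add t s y).symm⟩

theorem exists_returnTime_bound (hΩ : ϕ.limitRel = ∅) {K : Set X} (hK : IsCompact K) :
    ∃ T, ∀ x ∈ K, ∀ t, ϕ t x ∈ K → |t| ≤ T := by
  obtain ⟨T, hT⟩ := (hK.prod hK).elim_directed_family_closed
    (fun T : ℝ => closure (ϕ.orbitRelAfter T)) (fun _ => isClosed_closure)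
    (eq_empty_iff_forall_notMem.2 fun p ⟨_, hp⟩ => by
      have hp' : p ∈ ϕ.limitRel := mem_iInter₂.2 fun T _ => mem_iInter.1 hp T
      rw [hΩ] at hp'
      exact hp')
    (Antitone.directed_ge fun _ _ h => closure_mono (ϕ.orbitRelAfter_anti h))
  have hlt : ∀ x ∈ K, ∀ t, ϕ t x ∈ K → t < T := fun x hx t ht => by
    by_contra! hTt
    exact (eq_empty_iff_forall_notMem.1 hT) (x, ϕ t x)
      ⟨⟨hx, ht⟩, subset_closure ⟨t, hTt, rfl⟩⟩
  refine ⟨T, fun x hx t ht => abs_le.2 ⟨?_, (hlt x hx t ht).le⟩⟩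
  have := hlt (ϕ t x) ht (-t) (by rwa [← map_add, neg_add_cancel, map_zero_apply])
  linarith

theorem exists_isOpen_forall_returnTime_lt [LocallyCompactSpace X] [T2Space X]
    (hΩ : ϕ.limitRel = ∅) (x₀ : X) {ε : ℝ} (hε : 0 < ε) :
    ∃ D, IsOpen D ∧ x₀ ∈ D ∧ ∀ y ∈ D, ∀ t, ϕ t y ∈ D → |t| < ε := by
  obtain ⟨K, hK, hx₀K⟩ := exists_compact_mem_nhds x₀
  obtain ⟨T, hT⟩ := ϕ.exists_returnTime_bound hΩ hK
  have hJ := ϕ.isClosed_setOf_exists_mem_eq_apply ((isCompact_Icc (a := -T) (b := T)).diff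
    (isOpen_Ioo (a := -ε) (b := ε)))
  have hx₀ : (x₀, x₀) ∉ {p : X × X | ∃ t ∈ Icc (-T) T \ Ioo (-ε) ε, p.2 = ϕ t p.1} := by
    rintro ⟨t, ⟨-, ht⟩, h⟩
    rw [ϕ.eq_zero_of_apply_eq_self hΩ h.symm] at ht
    exact ht ⟨neg_lt_zero.2 hε, hε⟩
  obtain ⟨A, B, hA, hB, hx₀A, hx₀B, hAB⟩ := isOpen_prod_iff.1 hJ.isOpen_compl x₀ x₀ hx₀
  refine ⟨interior K ∩ (A ∩ B), isOpen_interior.inter (hA.inter hB),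
    ⟨mem_interior_iff_mem_nhds.2 hx₀K, hx₀A, hx₀B⟩, ?_⟩
  rintro y ⟨hyK, hyA, -⟩ t ⟨htK, -, htB⟩
  by_contra hεt
  exact hAB (mk_mem_prod hyA htB) ⟨t, ⟨abs_le.1 (hT y (interior_subset hyK) t
    (interior_subset htK)), fun h => hεt (abs_lt.2 h)⟩, rfl⟩

theorem exists_continuous_eventually_apply_eq_add [NormalSpace X] [T2Space X] {x₀ : X}
    (hx₀ : ∀ t, ϕ t x₀ = x₀ → t = 0) :
    ∃ g : X → ℝ, Continuous g ∧
      ∀ᶠ y in 𝓝 x₀, ∀ t ∈ Icc (-(1 / 4) : ℝ) (1 / 4), g (ϕ t y) = g y + t := by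
  have horbit : Continuous fun t => ϕ t x₀ := ϕ.continuous continuous_id continuous_const
  have hdisj : Disjoint ((ϕ · x₀) '' Icc (-(1 / 4)) (1 / 4)) ((ϕ · x₀) '' Icc (3 / 4) (5 / 4)) := by
    rw [disjoint_left]
    rintro _ ⟨u, hu, rfl⟩ ⟨v, hv, huv : ϕ v x₀ = ϕ u x₀⟩
    have : v - u = 0 := hx₀ _ <| by
      rw [sub_eq_neg_add, map_add, huv, ← map_add, neg_add_cancel, map_zero_apply]
    linarith [hu.2, hv.1]
  obtain ⟨f, hf0, hf1⟩ := exists_continuous_eventually_eq_zero_one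
    (isCompact_Icc.image horbit).isClosed (isCompact_Icc.image horbit).isClosed hdisj
  have hnear {I : Set ℝ} (hI : IsCompact I) {c : ℝ} (hc : ∀ᶠ x in 𝓝ˢ ((ϕ · x₀) '' I), f x = c) :
      ∀ᶠ y in 𝓝 x₀, ∀ t ∈ I, f (ϕ t y) = c :=
    hI.eventually_forall_of_forall_eventually fun t ht =>
      ((ϕ.continuous continuous_snd continuous_fst).continuousAt (x := (x₀, t))).eventually
        (hc.filter_mono (nhds_le_nhdsSet (mem_image_of_mem _ ht)))
  have hfϕ : Continuous fun p : X × ℝ => f (ϕ p.2 p.1) :=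
    f.continuous.comp (ϕ.continuous continuous_snd continuous_fst)
  refine ⟨fun y => ∫ s in (0 : ℝ)..1, f (ϕ s y),
    intervalIntegral.continuous_parametric_intervalIntegral_of_continuous' hfϕ 0 1, ?_⟩
  filter_upwards [hnear isCompact_Icc hf0, hnear isCompact_Icc hf1] with y hy0 hy1 t ht
  have hshift : ∫ s in (0 : ℝ)..1, f (ϕ s (ϕ t y)) = ∫ s in t..1 + t, f (ϕ s y) := by
    simp only [← map_add]
    rw [intervalIntegral.integral_comp_add_right (fun s => f (ϕ s y)), zero_add]
  rw [hshift]
  refine integral_shift_eq_add_of_eqOn (hfϕ.comp (Continuous.prodMk_right y))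
    (fun s hs => hy0 s ?_) (fun s hs => hy1 s ?_)
  all_goals
    obtain ⟨ht₁, ht₂⟩ := ht
    rcases mem_uIcc.1 hs with ⟨h₁, h₂⟩ | ⟨h₁, h₂⟩ <;> constructor <;> linarith

theorem exists_isTimeOn_of_section {S U : Set X} (hS : ∀ x ∈ S, ∀ t, ϕ t x ∈ S → t = 0)
    (hU : IsOpen U) {θ : X → ℝ} (hθ : Continuous θ) (hθS : ∀ y ∈ U, ϕ (θ y) y ∈ S) :
    ∃ V τ, IsOpen V ∧ U ⊆ V ∧ IsInvariant ϕ V ∧ ϕ.IsTimeOn τ V := by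
  have huniq (z : X) {a b : ℝ} (ha : ϕ a z ∈ S) (hb : ϕ b z ∈ S) : a = b := by
    have := hS _ ha (b - a) (by rwa [← map_add, sub_add_cancel])
    linarith
  let τ : X → ℝ := fun z => -Classical.epsilon fun r => ϕ r z ∈ S
  have hτ {z : X} {r : ℝ} (hr : ϕ r z ∈ S) : τ z = -r := by
    show -Classical.epsilon _ = -r
    rw [huniq z (Classical.epsilon_spec (p := fun r => ϕ r z ∈ S) ⟨r, hr⟩) hr]
  have hhit {t : ℝ} {y : X} (hy : ϕ t y ∈ U) : ϕ (θ (ϕ t y) + t) y ∈ S := by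
    rw [map_add]
    exact hθS _ hy
  refine ⟨⋃ t, ϕ t ⁻¹' U, τ, isOpen_iUnion fun t => hU.preimage (ϕ.continuous_toFun t),
    fun y hy => mem_iUnion.2 ⟨0, by rwa [mem_preimage, map_zero_apply]⟩, ?_, ⟨?_, ?_⟩⟩
  · intro t z hz
    obtain ⟨s, hs⟩ := mem_iUnion.1 hz
    exact mem_iUnion.2 ⟨s - t, by rwa [mem_preimage, ← map_add, sub_add_cancel]⟩
  · intro z hz
    obtain ⟨s, hs⟩ := mem_iUnion.1 hz
    have hcont : Continuous fun y => -(θ (ϕ s y) + s) :=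
      ((hθ.comp (ϕ.continuous_toFun s)).add continuous_const).neg
    exact hcont.continuousAt.congr (eventually_of_mem
      ((hU.preimage (ϕ.continuous_toFun s)).mem_nhds hs) fun y hy => (hτ (hhit hy)).symm)
  · intro t z hz
    obtain ⟨s, hs⟩ := mem_iUnion.1 hz
    have hs' : ϕ (θ (ϕ s z) + s - t) (ϕ t z) ∈ S := by
      rw [← map_add, sub_add_cancel]
      exact hhit hs
    rw [hτ (hhit hs), hτ hs']
    ring

theorem exists_isTimeOn_nhds [LocallyCompactSpace X] [NormalSpace X] [T2Space X]
    (hΩ : ϕ.limitRel = ∅) (x₀ : X) :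
    ∃ V τ, IsOpen V ∧ x₀ ∈ V ∧ IsInvariant ϕ V ∧ ϕ.IsTimeOn τ V := by
  obtain ⟨g, hg, hgx₀⟩ :=
    ϕ.exists_continuous_eventually_apply_eq_add fun t => ϕ.eq_zero_of_apply_eq_self hΩ
  obtain ⟨N, hN, hNo, hx₀N⟩ := eventually_nhds_iff.1 hgx₀
  obtain ⟨D, hDo, hx₀D, hD⟩ :=
    ϕ.exists_isOpen_forall_returnTime_lt hΩ x₀ (by norm_num : (0 : ℝ) < 1 / 4)
  have hθ : Continuous fun y => g x₀ - g y := continuous_const.sub hg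
  let S := {y ∈ D ∩ N | g y = g x₀}
  let U := {y ∈ N | |g x₀ - g y| < 1 / 4 ∧ ϕ (g x₀ - g y) y ∈ D ∩ N}
  have hS : ∀ x ∈ S, ∀ t, ϕ t x ∈ S → t = 0 := by
    rintro x ⟨⟨hxD, hxN⟩, hgx⟩ t ⟨⟨htD, -⟩, hgt⟩
    have := hN x hxN t (abs_le.1 (hD x hxD t htD).le)
    linarith
  have hU : IsOpen U := hNo.inter ((isOpen_lt (continuous_abs.comp hθ) continuous_const).inter
    ((hDo.inter hNo).preimage (ϕ.continuous hθ continuous_id)))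
  have hθS : ∀ y ∈ U, ϕ (g x₀ - g y) y ∈ S := by
    rintro y ⟨hyN, hθy, hyDN⟩
    refine ⟨hyDN, ?_⟩
    rw [hN y hyN _ (abs_le.1 hθy.le)]
    ring
  obtain ⟨V, τ, hV, hUV, hVinv, hτ⟩ := ϕ.exists_isTimeOn_of_section hS hU hθ hθS
  exact ⟨V, τ, hV, hUV ⟨hx₀N, by simp, by simpa using ⟨hx₀D, hx₀N⟩⟩, hVinv, hτ⟩

theorem isTimeOn_finsum {ι : Type*} (ρ : PartitionOfUnity ι X)
    (hρ : ∀ i t x, ρ i (ϕ t x) = ρ i x)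
    {τ : ι → X → ℝ} (hτ : ∀ i, ϕ.IsTimeOn (τ i) (tsupport (ρ i))) :
    ϕ.IsTimeOn (fun x => ∑ᶠ i, ρ i x • τ i x) univ := by
  refine ⟨fun x _ => (ρ.continuous_finsum_smul fun i => (hτ i).continuousAt).continuousAt,
    fun t x _ => ?_⟩
  have hterm (i : ι) : ρ i (ϕ t x) • τ i (ϕ t x) = ρ i x • (τ i x + t) := by
    rw [hρ]
    by_cases hx : x ∈ tsupport (ρ i)
    · rw [(hτ i).map_flow t x hx]
    · simp [image_eq_zero_of_notMem_tsupport hx]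
  calc ∑ᶠ i, ρ i (ϕ t x) • τ i (ϕ t x) = ∑ᶠ i, ρ i x • (τ i x + t) := finsum_congr hterm
    _ = ∑ i ∈ ρ.finsupport x, ρ i x • (τ i x + t) :=
      (ρ.sum_finsupport_smul_eq_finsum fun i y => τ i y + t).symm
    _ = ∑ i ∈ ρ.finsupport x, ρ i x • τ i x + (∑ i ∈ ρ.finsupport x, ρ i x) • t := by
      simp only [smul_add, Finset.sum_add_distrib, Finset.sum_smul]
    _ = (∑ᶠ i, ρ i x • τ i x) + t := by
      rw [ρ.sum_finsupport_smul_eq_finsum τ, ρ.sum_finsupport (mem_univ x), one_smul]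

theorem isClosed_setOf_exists_eq_apply [T2Space X] (hΩ : ϕ.limitRel = ∅) :
    IsClosed {p : X × X | ∃ t, p.2 = ϕ t p.1} := by
  have h := ϕ.isClosed_orbitRelAfter_zero hΩ
  convert h.union (h.preimage continuous_swap) using 1
  ext ⟨x, y⟩
  simp only [orbitRelAfter, mem_ofPred_eq, mem_union, mem_preimage, Prod.fst_swap, Prod.snd_swap]
  constructor
  · rintro ⟨t, rfl⟩
    rcases le_total 0 t with ht | ht
    · exact Or.inl ⟨t, ht, rfl⟩
    · exact Or.inr ⟨-t, neg_nonneg.2 ht, by rw [← map_add, neg_add_cancel, map_zero_apply]⟩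
  · rintro (⟨t, -, h⟩ | ⟨t, -, rfl⟩)
    · exact ⟨t, h⟩
    · exact ⟨-t, by rw [← map_add, neg_add_cancel, map_zero_apply]⟩

theorem exists_isTimeOn_univ_of_forall_nhds [LocallyCompactSpace X] [SigmaCompactSpace X]
    [T2Space X] (hclosed : IsClosed {p : X × X | ∃ t, p.2 = ϕ t p.1})
    (hloc : ∀ x, ∃ V τ, IsOpen V ∧ x ∈ V ∧ IsInvariant ϕ V ∧ ϕ.IsTimeOn τ V) :
    ∃ τ, ϕ.IsTimeOn τ univ := by
  let := ϕ.toAddAction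
  have : ContinuousConstVAdd ℝ X := ⟨ϕ.continuous_toFun⟩
  let q : X → Quotient (AddAction.orbitRel ℝ X) := Quotient.mk _
  have hq : IsOpenQuotientMap q := AddAction.isOpenQuotientMap_quotientMk
  have hqeq {x y : X} : q x = q y ↔ ∃ t, x = ϕ t y := by
    rw [Quotient.eq, AddAction.orbitRel_apply, AddAction.mem_orbit_iff]
    exact exists_congr fun t => eq_comm
  have : T2Space (Quotient (AddAction.orbitRel ℝ X)) := by
    rw [t2Space_iff_of_isOpenQuotientMap hq]
    convert hclosed.preimage continuous_swap using 1
    ext p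
    exact hqeq
  have := hq.locallyCompactSpace
  have : SigmaCompactSpace (Quotient (AddAction.orbitRel ℝ X)) :=
    ⟨by simpa [hq.surjective.range_eq] using isSigmaCompact_univ.image hq.continuous⟩
  choose V τ hVo hxV hVinv hτ using hloc
  obtain ⟨ρ, hρ⟩ := PartitionOfUnity.exists_isSubordinate isClosed_univ (fun x => q '' V x)
    (fun x => hq.isOpenMap _ (hVo x)) fun y _ => by
      obtain ⟨x, rfl⟩ := hq.surjective y
      exact mem_iUnion.2 ⟨x, mem_image_of_mem q (hxV x)⟩
  have hsat (x : X) : q ⁻¹' (q '' V x) ⊆ V x := by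
    rintro z ⟨y, hy, hyz⟩
    obtain ⟨t, rfl⟩ := hqeq.1 hyz.symm
    exact hVinv x t hy
  refine ⟨_, ϕ.isTimeOn_finsum (ρ.comap ⟨q, hq.continuous⟩)
    (fun i t x => congr_arg (ρ i) (hqeq.2 ⟨t, rfl⟩)) fun i => (hτ i).mono ?_⟩
  exact (tsupport_comp_subset_preimage _ hq.continuous).trans
    ((preimage_mono (hρ i)).trans (hsat i))

theorem exists_isTimeOn_univ [LocallyCompactSpace X] [SigmaCompactSpace X] [T2Space X]
    (hΩ : ϕ.limitRel = ∅) : ∃ τ, ϕ.IsTimeOn τ univ :=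
  ϕ.exists_isTimeOn_univ_of_forall_nhds (ϕ.isClosed_setOf_exists_eq_apply hΩ)
    (ϕ.exists_isTimeOn_nhds hΩ)

end Flow

/-- For a flow `φ` on a locally compact, σ-compact Hausdorff space `X`,
the following are equivalent: (i) the orbit relation `𝒪φ` is closed and there are no
periodic points; (ii) `Ωφ = ∅`; (iii) `φ` is parallelizable. -/
theorem parallelizable_iff
    {X : Type u} [TopologicalSpace X] [LocallyCompactSpace X]
    [SigmaCompactSpace X] [T2Space X]
    (φ : ℝ × X → X) (hφc : Continuous φ)
    (hφ0 : ∀ x : X, φ (0, x) = x)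
    (hφadd : ∀ (t s : ℝ) (x : X), φ (t, φ (s, x)) = φ (t + s, x)) :
    ((IsClosed {p : X × X | ∃ t : ℝ, 0 ≤ t ∧ p.2 = φ (t, p.1)} ∧
        ¬ ∃ (x : X) (t : ℝ), 1 ≤ t ∧ φ (t, x) = x) ↔
      (⋂ T ∈ Set.Ici (0:ℝ),
          closure {p : X × X | ∃ t : ℝ, T ≤ t ∧ p.2 = φ (t, p.1)}) = ∅) ∧
    ((⋂ T ∈ Set.Ici (0:ℝ),
          closure {p : X × X | ∃ t : ℝ, T ≤ t ∧ p.2 = φ (t, p.1)}) = ∅ ↔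
      ∃ (Y : Type u) (tY : TopologicalSpace Y) (h : ℝ × Y → X),
        @Parallelizes X _ φ Y tY h) := by
  let ϕ : Flow ℝ X := ⟨fun t x => φ (t, x), hφc, fun t s x => (hφadd t s x).symm, hφ0⟩
  refine ⟨ϕ.limitRel_eq_empty_iff.symm, fun hΩ => ?_, fun ⟨Y, _, h, hh⟩ => ?_⟩
  · obtain ⟨τ, hτ⟩ := ϕ.exists_isTimeOn_univ hΩ
    exact ⟨_, _, _, ϕ.parallelizes_of_isTimeOn hτ⟩
  · obtain ⟨τ, hτ⟩ := ϕ.exists_isTimeOn_of_parallelizes hh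
    exact ϕ.limitRel_eq_empty_of_isTimeOn hτ
end

section
/- Let X̂ be a Hausdorff uniform space and let X be a dense subset of X̂ carrying the induced uniformity. Let f be a relation on X that is closed in X × X, and let f̂ be the closure of f in X̂ × X̂. Then (X × X) ∩ 𝒞f̂ = 𝒞f, where 𝒞f̂ is the chain relation of f̂ with respect to the uniformity of X̂ and 𝒞f is the chain relation of f with respect to the induced uniformity on X. -/
/-!
Every entourage `W` of `X̂` shadows the closure `f̂` by `f` itself: each pair of `f̂` is
`W`-close at both ends to the image of a pair of `f`. Hence a `W`-chain of `f̂` between two points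
of `X` can be rerouted through points of `X`, jumping along `f` and across gaps that are small
for `X̂`, i.e. small for the induced uniformity of `X`. Conversely, the inclusion maps chains of `f`
to chains of `f̂`.
-/

/-- Composition of relations: `relComp g f = g ∘ f` (first `f`, then `g`). -/
def relComp {X Y Z : Type*} (g : Set (Y × Z)) (f : Set (X × Y)) : Set (X × Z) :=
  {p | ∃ y, (p.1, y) ∈ f ∧ (y, p.2) ∈ g}

/-- `relIterate F n` is the `n`-fold composition `Fⁿ` (with `F⁰` the diagonal). -/
def relIterate {X : Type*} (F : Set (X × X)) : ℕ → Set (X × X)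
  | 0 => {p : X × X | p.1 = p.2}
  | n + 1 => relComp F (relIterate F n)

/-- The orbit relation `𝒪g = ⋃_{n ≥ 1} gⁿ`. -/
def orbitRel {X : Type*} (g : Set (X × X)) : Set (X × X) :=
  ⋃ n ∈ Set.Ici (1 : ℕ), relIterate g n

/-- The chain relation of a relation `f` on a uniform space `X`:
`𝒞f = ⋂_V 𝒪(V ∘ f ∘ V)`, where `V` ranges over the entourages of `X`. -/
def chainRelU {X : Type*} [UniformSpace X] (f : Set (X × X)) : Set (X × X) :=
  ⋂ V ∈ uniformity X, orbitRel (relComp V (relComp f V))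

open Uniformity SetRel

section Relations

variable {X Y : Type*}

lemma mem_orbitRel_iff {g : Set (X × X)} {p : X × X} :
    p ∈ orbitRel g ↔ ∃ n, p ∈ relIterate g (n + 1) := by
  simp only [orbitRel, Set.mem_iUnion, Set.mem_Ici, exists_prop]
  exact ⟨fun ⟨n, hn, hp⟩ => ⟨n - 1, by rwa [Nat.sub_add_cancel hn]⟩,
    fun ⟨n, hp⟩ => ⟨n + 1, n.succ_pos, hp⟩⟩

lemma relIterate_subset_preimage (m : X → Y) {g : Set (X × X)} {G : Set (Y × Y)}
    (h : g ⊆ Prod.map m m ⁻¹' G) : ∀ n, relIterate g n ⊆ Prod.map m m ⁻¹' relIterate G n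
  | 0 => fun _ hp => congrArg m hp
  | n + 1 => fun _ ⟨y, hy, hyp⟩ => ⟨m y, relIterate_subset_preimage m h n hy, h hyp⟩

lemma orbitRel_subset_preimage (m : X → Y) {g : Set (X × X)} {G : Set (Y × Y)}
    (h : g ⊆ Prod.map m m ⁻¹' G) : orbitRel g ⊆ Prod.map m m ⁻¹' orbitRel G := fun _ hp =>
  let ⟨n, hn⟩ := mem_orbitRel_iff.1 hp
  mem_orbitRel_iff.2 ⟨n, relIterate_subset_preimage m h (n + 1) hn⟩

end Relations

section UniformSpace

variable {X Y : Type*} [UniformSpace Y] {m : X → Y}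

lemma exists_mem_of_mem_relComp_closure_image {f : Set (X × X)} {W : Set (Y × Y)}
    (hW : W ∈ 𝓤 Y) {r q : Y}
    (h : (r, q) ∈ relComp W (relComp (closure (Prod.map m m '' f)) W)) :
    ∃ a b, (a, b) ∈ f ∧ (r, m a) ∈ W ○ W ∧ (m b, q) ∈ W ○ W := by
  obtain ⟨u, ⟨v, hrv, hvu⟩, huq⟩ := h
  rw [closure_eq_inter_uniformity, Set.mem_iInter₂] at hvu
  obtain ⟨p, hva, p', ⟨⟨a, b⟩, hab, hp⟩, hbu⟩ := hvu W hW
  obtain ⟨rfl, rfl⟩ : m a = p ∧ m b = p' := Prod.mk.inj hp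
  exact ⟨a, b, hab, ⟨v, hrv, hva⟩, ⟨u, hbu, huq⟩⟩

/-- The lifted chain passes through the first point `a` of each shadowing pair, which is only
`U`-close to the corresponding point of the original chain: hence the slack `(q, m y) ∈ U`. -/
lemma mem_relIterate_of_forall_exists {f V : Set (X × X)} {G U : Set (Y × Y)} (hU : U ∈ 𝓤 Y)
    (hUV : Prod.map m m ⁻¹' (U ○ U) ⊆ V)
    (hG : ∀ r q, (r, q) ∈ G → ∃ a b, (a, b) ∈ f ∧ (r, m a) ∈ U ∧ (m b, q) ∈ U) (x : X) :
    ∀ n (y : X) (q : Y), (m x, q) ∈ relIterate G (n + 1) → (q, m y) ∈ U →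
      (x, y) ∈ relIterate (relComp V (relComp f V)) (n + 1) := by
  have hVU : Prod.map m m ⁻¹' U ⊆ V :=
    (Set.preimage_mono (subset_comp_self_of_mem_uniformity hU)).trans hUV
  intro n
  induction n with
  | zero =>
    rintro y q ⟨_, (rfl : m x = _), hxq⟩ hqy
    obtain ⟨a, b, hab, hxa, hbq⟩ := hG _ _ hxq
    exact ⟨x, rfl, b, ⟨a, hVU hxa, hab⟩, hUV ⟨q, hbq, hqy⟩⟩
  | succ n ih =>
    rintro y q ⟨r, hxr, hrq⟩ hqy
    obtain ⟨a, b, hab, hra, hbq⟩ := hG _ _ hrq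
    have haa : (m a, m a) ∈ U := refl_mem_uniformity hU
    exact ⟨a, ih a r hxr hra, b, ⟨a, hVU haa, hab⟩, hUV ⟨q, hbq, hqy⟩⟩

variable [UniformSpace X]

theorem UniformContinuous.chainRelU_subset_preimage (hm : UniformContinuous m)
    {f : Set (X × X)} {F : Set (Y × Y)} (hfF : f ⊆ Prod.map m m ⁻¹' F) :
    chainRelU f ⊆ Prod.map m m ⁻¹' chainRelU F := by
  intro p hp
  simp only [chainRelU, Set.mem_preimage, Set.mem_iInter] at hp ⊢
  intro W hW
  refine orbitRel_subset_preimage m ?_ (hp _ (hm hW))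
  rintro _ ⟨b, ⟨a, hxa, hab⟩, hby⟩
  exact ⟨m b, ⟨m a, hxa, hfF hab⟩, hby⟩

theorem IsUniformInducing.preimage_chainRelU_closure_image_subset (hm : IsUniformInducing m)
    (f : Set (X × X)) :
    Prod.map m m ⁻¹' chainRelU (closure (Prod.map m m '' f)) ⊆ chainRelU f := by
  rintro ⟨x, y⟩ h
  simp only [chainRelU, Set.mem_preimage, Set.mem_iInter] at h ⊢
  intro V hV
  rw [← hm.comap_uniformity] at hV
  obtain ⟨Vh, hVh, hVhV⟩ := hV
  obtain ⟨U, hU, hUVh⟩ := comp_mem_uniformity_sets hVh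
  obtain ⟨W, hW, hWU⟩ := comp_mem_uniformity_sets hU
  obtain ⟨n, hn⟩ := mem_orbitRel_iff.1 (h W hW)
  refine mem_orbitRel_iff.2 ⟨n, mem_relIterate_of_forall_exists hU
    ((Set.preimage_mono hUVh).trans hVhV) (fun r q hrq => ?_) x n y (m y) hn
    (refl_mem_uniformity hU)⟩
  obtain ⟨a, b, hab, hra, hbq⟩ := exists_mem_of_mem_relComp_closure_image hW hrq
  exact ⟨a, b, hab, hWU hra, hWU hbq⟩

theorem IsUniformInducing.mem_chainRelU_closure_image_iff (hm : IsUniformInducing m)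
    (f : Set (X × X)) (x y : X) :
    (m x, m y) ∈ chainRelU (closure (Prod.map m m '' f)) ↔ (x, y) ∈ chainRelU f :=
  ⟨fun h => hm.preimage_chainRelU_closure_image_subset f h,
    fun h => hm.uniformContinuous.chainRelU_subset_preimage
      (fun _ hp => subset_closure (Set.mem_image_of_mem _ hp)) h⟩

end UniformSpace

theorem chainRel_of_dense_subset_general
    {Xh : Type*} [UniformSpace Xh]
    (s : Set Xh)
    (f : Set (↥s × ↥s)) :
    ∀ x y : ↥s,
      ((x : Xh), (y : Xh)) ∈
          chainRelU (closure (Prod.map (Subtype.val : ↥s → Xh) Subtype.val '' f)) ↔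
        (x, y) ∈ chainRelU f :=
  (isUniformInducing_val s).mem_chainRelU_closure_image_iff f

/-- Let `X̂` be a Hausdorff uniform space, `X ⊆ X̂` dense with the induced
uniformity, `f` a closed relation on `X` and `f̂` the closure of `f` in `X̂ × X̂`.  Then
`(X × X) ∩ 𝒞f̂ = 𝒞f`. -/
theorem chainRel_of_dense_subset
    {Xh : Type*} [UniformSpace Xh] [T2Space Xh]
    (s : Set Xh) (hs : Dense s)
    (f : Set (↥s × ↥s)) (hf : IsClosed f) :
    ∀ x y : ↥s,
      ((x : Xh), (y : Xh)) ∈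
          chainRelU (closure (Prod.map (Subtype.val : ↥s → Xh) Subtype.val '' f)) ↔
        (x, y) ∈ chainRelU f :=
  chainRel_of_dense_subset_general s f
end
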